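/- arXiv:1107.1787 — 8 statements merged into one kernel-verified Lean document; each statement's English description precedes it below -/
import Mathlib

section
/- Let α > 0, P(x) = e^{-αx}(1-αx) with inverse P⁻¹ on [-e^{-2},∞), and define I(q) = exp(α·P⁻¹(q)) / (α·(α·P⁻¹(q) - 2)). Then for every q ≥ -e^{-3/2}/2 it holds that -2e^{3/2}/α ≤ I(q) < 0. -/
open Real

theorem I_bounds (α : ℝ) (hα : 0 < α)
    (P : ℝ → ℝ) (hP : ∀ x, P x = Real.exp (-α * x) * (1 - α * x))
    (Pinv : ℝ → ℝ)
    (hleft : ∀ x ≤ 2 / α, Pinv (P x) = x)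
    (hright : ∀ q, -Real.exp (-2) ≤ q → P (Pinv q) = q ∧ Pinv q ≤ 2 / α)
    (I : ℝ → ℝ)
    (hI : ∀ q, I q = Real.exp (α * Pinv q) / (α * (α * Pinv q - 2)))
    (q : ℝ) (hq : -Real.exp (-(3 / 2)) / 2 ≤ q) :
    -2 * Real.exp (3 / 2) / α ≤ I q ∧ I q < 0 := by
  -- exp(1/2) < 2
  have hexp_half : Real.exp (1/2 : ℝ) < 2 := by
    have h1 : Real.exp (1/2 : ℝ) * Real.exp (1/2 : ℝ) = Real.exp 1 := by
      rw [← Real.exp_add]; norm_num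
    have h2 := Real.exp_one_lt_d9
    nlinarith [Real.exp_pos (1/2 : ℝ)]
  have hq2 : -Real.exp (-2 : ℝ) ≤ q := by
    have : Real.exp (-(3/2) : ℝ) = Real.exp (-2 : ℝ) * Real.exp (1/2 : ℝ) := by
      rw [← Real.exp_add]; norm_num
    nlinarith [Real.exp_pos (-2 : ℝ)]
  obtain ⟨hPq, hxle⟩ := hright q hq2
  obtain ⟨y, hy⟩ : ∃ y, y = α * Pinv q := ⟨_, rfl⟩
  have hy2 : y ≤ 2 := by
    rw [hy]
    calc α * Pinv q ≤ α * (2 / α) := by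
          exact mul_le_mul_of_nonneg_left hxle hα.le
      _ = 2 := by field_simp
  have hqy : Real.exp (-y) * (1 - y) = q := by
    rw [← hPq, hP, hy]; ring_nf
  -- y ≤ 3/2
  have hy32 : y ≤ 3/2 := by
    by_contra hcon
    push_neg at hcon
    obtain ⟨s, hs⟩ : ∃ s, s = y - 3/2 := ⟨_, rfl⟩
    have hs0 : 0 < s := by rw [hs]; linarith
    have hs12 : s ≤ 1/2 := by rw [hs]; linarith
    have h1 : 1 - s < Real.exp (-s) := by
      have := Real.add_one_lt_exp (x := -s) (by linarith)
      linarith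
    have hmul : Real.exp s * Real.exp (-s) = 1 := by
      rw [← Real.exp_add]; simp
    have h2 : Real.exp s * (1 - s) < 1 := by
      nlinarith [Real.exp_pos s]
    have hlt : Real.exp s < 1 + 2 * s := by
      have h3 : (0:ℝ) < 1 - s := by linarith
      nlinarith [mul_nonneg hs0.le (show (0:ℝ) ≤ 1 - 2*s by linarith)]
    -- exp(-y)(1-y) = -exp(-3/2) * exp(-s) * (s + 1/2)
    have hsplit : Real.exp (-y) = Real.exp (-(3/2) : ℝ) * Real.exp (-s) := by
      rw [← Real.exp_add]; congr 1; rw [hs]; ring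
    have h1y : 1 - y = -(s + 1/2) := by rw [hs]; ring
    have hkey : Real.exp (-s) * (s + 1/2) > 1/2 := by
      nlinarith [mul_lt_mul_of_pos_right hlt (Real.exp_pos (-s))]
    have : q < -Real.exp (-(3/2) : ℝ) / 2 := by
      rw [← hqy, hsplit, h1y]
      have hpos := Real.exp_pos (-(3/2) : ℝ)
      nlinarith
    linarith
  have hylt2 : y < 2 := by linarith
  have hd : α * (y - 2) < 0 := mul_neg_of_pos_of_neg hα (by linarith)
  have hIq : I q = Real.exp y / (α * (y - 2)) := by rw [hI, ← hy]
  constructor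
  · rw [hIq, le_div_iff_of_neg hd]
    have hcalc : -2 * Real.exp (3/2 : ℝ) / α * (α * (y - 2))
        = 2 * Real.exp (3/2 : ℝ) * (2 - y) := by
      field_simp; ring
    rw [hcalc]
    have he : Real.exp y ≤ Real.exp (3/2 : ℝ) := Real.exp_le_exp.mpr hy32
    nlinarith [Real.exp_pos (3/2 : ℝ)]
  · rw [hIq]
    exact div_neg_of_pos_of_neg (Real.exp_pos y) hd
end

section
/- Let α, β, y ≥ 0 with β > 0, z ∈ ℝ, t ∈ (0,1], φ ∈ ℝ, and let P⁻¹ be the inverse on (-∞,2/α] of P(x)=e^{-αx}(1-αx). Define H(λ) = α·exp(αβ·∫₀ᵗ P⁻¹(exp(-e^{-2βr}y)·λ/α) dr - αφ + z - y) - λ for λ ∈ [0,∞). Then H is strictly decreasing (in particular nonincreasing) on [0,∞). -/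
open Real

theorem H_strictAntiOn (α β y z φ t : ℝ) (hα : 0 < α) (hβ : 0 < β) (hy : 0 ≤ y)
    (ht : t ∈ Set.Ioc (0 : ℝ) 1)
    (P : ℝ → ℝ) (hP : ∀ x, P x = Real.exp (-α * x) * (1 - α * x))
    (Pinv : ℝ → ℝ)
    (hleft : ∀ x ≤ 2 / α, Pinv (P x) = x)
    (hright : ∀ q, -Real.exp (-2) ≤ q → P (Pinv q) = q ∧ Pinv q ≤ 2 / α)
    (H : ℝ → ℝ)
    (hH : ∀ l, H l =
      α * Real.exp (α * β * (∫ r in (0 : ℝ)..t,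
          Pinv (Real.exp (-Real.exp (-2 * β * r) * y) * l / α))
        - α * φ + z - y) - l) :
    StrictAntiOn H (Set.Ici 0) := by
  -- P is strictly decreasing on (-∞, 2/α]
  have hPanti : StrictAntiOn P (Set.Iic (2 / α)) := by
    have key : StrictAntiOn (fun x => Real.exp (-α * x) * (1 - α * x)) (Set.Iic (2 / α)) := by
      apply strictAntiOn_of_deriv_neg (convex_Iic _)
      · fun_prop
      · intro x hx
        rw [interior_Iic, Set.mem_Iio] at hx
        have hd : HasDerivAt (fun x => Real.exp (-α * x) * (1 - α * x))
            (Real.exp (-α * x) * (-α * 1) * (1 - α * x) + Real.exp (-α * x) * (0 - α * 1)) x := by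
          have h1 : HasDerivAt (fun x : ℝ => -α * x) (-α * 1) x := (hasDerivAt_id x).const_mul (-α)
          have h2 : HasDerivAt (fun x : ℝ => 1 - α * x) (0 - α * 1) x :=
            (hasDerivAt_const x 1).sub ((hasDerivAt_id x).const_mul α)
          exact h1.exp.mul h2
        rw [hd.deriv]
        have hex := Real.exp_pos (-α * x)
        have h2 : α * x < 2 := by
          rw [lt_div_iff₀ hα] at hx; linarith [hx]
        nlinarith [mul_pos (mul_pos hex hα) (by linarith : (0:ℝ) < 2 - α * x)]
    intro a ha b hb hab
    rw [hP, hP]; exact key ha hb hab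
  -- Pinv is antitone on [-e^{-2}, ∞)
  have hPinv_anti : ∀ q₁ q₂, -Real.exp (-2) ≤ q₁ → q₁ ≤ q₂ → Pinv q₂ ≤ Pinv q₁ := by
    intro q₁ q₂ h1 h12
    obtain ⟨hPq1, hle1⟩ := hright q₁ h1
    obtain ⟨hPq2, hle2⟩ := hright q₂ (le_trans h1 h12)
    by_contra hcon
    push_neg at hcon
    have := hPanti (Set.mem_Iic.2 hle1) (Set.mem_Iic.2 hle2) hcon
    rw [hPq1, hPq2] at this
    linarith
  have hneg : -Real.exp (-2) < 0 := neg_neg_of_pos (Real.exp_pos _)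
  -- the integrand, for fixed l ≥ 0, is antitone in r
  have hanti : ∀ l : ℝ, 0 ≤ l →
      Antitone (fun r => Pinv (Real.exp (-Real.exp (-2 * β * r) * y) * l / α)) := by
    intro l hl r₁ r₂ hr
    apply hPinv_anti
    · have : (0:ℝ) ≤ Real.exp (-Real.exp (-2 * β * r₁) * y) * l / α :=
        div_nonneg (mul_nonneg (Real.exp_pos _).le hl) hα.le
      linarith
    · apply div_le_div_of_nonneg_right ?_ hα.le
      apply mul_le_mul_of_nonneg_right _ hl
      apply Real.exp_le_exp.2
      have : Real.exp (-2 * β * r₂) ≤ Real.exp (-2 * β * r₁) := by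
        apply Real.exp_le_exp.2; nlinarith
      nlinarith
  have hint : ∀ l : ℝ, 0 ≤ l →
      IntervalIntegrable (fun r => Pinv (Real.exp (-Real.exp (-2 * β * r) * y) * l / α))
        MeasureTheory.volume 0 t :=
    fun l hl => (hanti l hl).intervalIntegrable
  intro l₁ hl₁ l₂ hl₂ hl
  simp only [Set.mem_Ici] at hl₁ hl₂
  rw [hH, hH]
  have hI : (∫ r in (0:ℝ)..t, Pinv (Real.exp (-Real.exp (-2 * β * r) * y) * l₂ / α))
      ≤ ∫ r in (0:ℝ)..t, Pinv (Real.exp (-Real.exp (-2 * β * r) * y) * l₁ / α) := by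
    apply intervalIntegral.integral_mono_on ht.1.le (hint l₂ hl₂) (hint l₁ hl₁)
    intro r _
    apply hPinv_anti
    · have : (0:ℝ) ≤ Real.exp (-Real.exp (-2 * β * r) * y) * l₁ / α :=
        div_nonneg (mul_nonneg (Real.exp_pos _).le hl₁) hα.le
      linarith
    · apply div_le_div_of_nonneg_right ?_ hα.le
      exact mul_le_mul_of_nonneg_left hl.le (Real.exp_pos _).le
  have hE : Real.exp (α * β * (∫ r in (0:ℝ)..t,
        Pinv (Real.exp (-Real.exp (-2 * β * r) * y) * l₂ / α)) - α * φ + z - y)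
      ≤ Real.exp (α * β * (∫ r in (0:ℝ)..t,
        Pinv (Real.exp (-Real.exp (-2 * β * r) * y) * l₁ / α)) - α * φ + z - y) := by
    apply Real.exp_le_exp.2
    have := mul_le_mul_of_nonneg_left hI (by positivity : (0:ℝ) ≤ α * β)
    linarith
  nlinarith [hE]
end

section
/- (Theorem on small holdings) Let α > 0, β > 0, y ≥ 0, z ≥ 2y, and φ ∈ [0, (z-2y)/α]. For deterministic measurable ζ : [0,t] → [0,∞) with ∫₀ᵗ ζ_v dv ≤ φ, define f̃(ζ) = ∫₀ᵗ ζ_r · exp(e^{-βr}z - e^{-2βr}y - α e^{-βr}∫₀ʳ e^{βv}ζ_v dv) dr. Then sup over all such ζ of f̃(ζ) equals (1 - e^{-αφ})·e^{z-y}/α. -/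
open Real MeasureTheory Set Filter Topology

/-!
Write `ψ r = ∫₀ʳ ζ`. Since `e^{βv} ≥ 1`, `e^{-βr} ≤ 1` and `αψ ≤ z - 2y`, the exponent is at most
`z - y - αψ(r)`, and the chain rule for the absolutely continuous `ψ` gives
`∫₀ᵗ ζ e^{-αψ} = (1 - e^{-αψ(t)})/α ≤ (1 - e^{-αφ})/α`.
Conversely, for the block liquidation `ζ = (φ/δ)·1_(0,δ]` the exponent is at least
`e^{-βδ}z - y - α e^{βδ} ψ(r)` wherever `ζ ≠ 0`, so the same identity bounds the value from below
by a quantity continuous in `δ` that equals the claimed supremum at `δ = 0`.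
-/

theorem AbsolutelyContinuousOnInterval.comp_locallyLipschitz {E Y : Type*}
    [SeminormedAddCommGroup E] [PseudoMetricSpace Y] {F : ℝ → E} {h : E → Y} {a b : ℝ}
    (hF : AbsolutelyContinuousOnInterval F a b) (hh : LocallyLipschitz h) :
    AbsolutelyContinuousOnInterval (h ∘ F) a b := by
  obtain ⟨K, hK⟩ := (hh.locallyLipschitzOn (s := F '' uIcc a b)).exists_lipschitzOnWith_of_compact
    (isCompact_uIcc.image_of_continuousOn hF.continuousOn)
  have hlim := Tendsto.const_mul (K : ℝ) hF
  rw [mul_zero] at hlim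
  refine squeeze_zero' (.of_forall fun _ ↦ Finset.sum_nonneg fun _ _ ↦ dist_nonneg) ?_ hlim
  filter_upwards [mem_inf_of_right (mem_principal_self _)] with E hE
  rw [Finset.mul_sum]
  exact Finset.sum_le_sum fun i hi ↦
    hK.dist_le_mul _ (mem_image_of_mem F (hE.1 i hi).1) _ (mem_image_of_mem F (hE.1 i hi).2)

theorem intervalIntegral.integral_deriv_comp_primitive_mul {f h : ℝ → ℝ} {a b : ℝ}
    (hf : IntervalIntegrable f volume a b) (hh : ContDiff ℝ 1 h) :
    ∫ x in a..b, deriv h (∫ t in a..x, f t) * f x = h (∫ t in a..b, f t) - h 0 := by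
  have hG := (hf.absolutelyContinuousOnInterval_intervalIntegral (c := a) left_mem_uIcc
    ).comp_locallyLipschitz hh.locallyLipschitz
  have hFTC := hG.integral_deriv_eq_sub
  simp only [Function.comp_apply, intervalIntegral.integral_same] at hFTC
  rw [← hFTC]
  refine intervalIntegral.integral_congr_ae ?_
  filter_upwards [hf.ae_hasDerivAt_integral] with x hx hxab
  have hFx := hx (uIoc_subset_uIcc hxab) a left_mem_uIcc
  exact ((hh.differentiable one_ne_zero _).hasDerivAt.comp x hFx).deriv.symm

theorem intervalIntegral.integral_mul_exp_sub_mul_primitive {f : ℝ → ℝ} {a b c : ℝ} (A : ℝ)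
    (hf : IntervalIntegrable f volume a b) (hc : c ≠ 0) :
    ∫ x in a..b, f x * exp (A - c * ∫ t in a..x, f t) =
      exp A * (1 - exp (-(c * ∫ t in a..b, f t))) / c := by
  set h : ℝ → ℝ := fun s ↦ -(exp (A - c * s) / c)
  have hderiv (s : ℝ) : HasDerivAt h (exp (A - c * s)) s := by
    refine ((((hasDerivAt_id' s).const_mul c).const_sub A).exp.div_const c).neg.congr_deriv ?_
    field_simp
  have hh : ContDiff ℝ 1 h := by fun_prop
  have := integral_deriv_comp_primitive_mul hf hh
  simp only [fun s ↦ (hderiv s).deriv, h] at this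
  simp_rw [mul_comm (f _), this, mul_zero, sub_zero, sub_eq_add_neg A, exp_add]
  ring

lemma discounted_exponent_le {α y z u P I : ℝ} (hα : 0 ≤ α) (hy : 0 ≤ y) (hu₀ : 0 ≤ u)
    (hu₁ : u ≤ 1) (hP : α * P ≤ z - 2 * y) (hPI : P ≤ I) :
    u * z - u ^ 2 * y - α * u * I ≤ z - y - α * P := by
  nlinarith [mul_le_mul_of_nonneg_left hPI (mul_nonneg hα hu₀), mul_nonneg hy (sub_nonneg.2 hu₁)]

lemma intervalIntegrable_of_norm_le {E : Type*} [NormedAddCommGroup E] {f : ℝ → E} {M : ℝ}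
    (hf : AEStronglyMeasurable f volume) (hM : ∀ x, ‖f x‖ ≤ M) (a b : ℝ) :
    IntervalIntegrable f volume a b :=
  intervalIntegrable_const.mono_fun' hf.restrict (ae_of_all _ hM)

noncomputable def holdingsExponent (α β y z : ℝ) (ζ : ℝ → ℝ) (r : ℝ) : ℝ :=
  exp (-β * r) * z - exp (-2 * β * r) * y
    - α * exp (-β * r) * ∫ v in (0 : ℝ)..r, exp (β * v) * ζ v

noncomputable def holdingsValue (α β y z t : ℝ) (ζ : ℝ → ℝ) : ℝ :=
  ∫ r in (0 : ℝ)..t, ζ r * exp (holdingsExponent α β y z ζ r)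

noncomputable def blockLiquidation (φ δ : ℝ) : ℝ → ℝ :=
  (Ioc 0 δ).indicator fun _ ↦ φ / δ

section

variable {φ δ : ℝ}

lemma measurable_blockLiquidation : Measurable (blockLiquidation φ δ) :=
  measurable_const.indicator measurableSet_Ioc

lemma blockLiquidation_nonneg (hφ : 0 ≤ φ) (hδ : 0 ≤ δ) (v : ℝ) : 0 ≤ blockLiquidation φ δ v :=
  indicator_nonneg (fun _ _ ↦ div_nonneg hφ hδ) v

lemma blockLiquidation_le (hφ : 0 ≤ φ) (hδ : 0 ≤ δ) (v : ℝ) : blockLiquidation φ δ v ≤ φ / δ :=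
  indicator_le_self' (fun _ _ ↦ div_nonneg hφ hδ) v

lemma integral_blockLiquidation {t : ℝ} (hδ : 0 < δ) (hδt : δ ≤ t) :
    ∫ v in (0 : ℝ)..t, blockLiquidation φ δ v = φ := by
  simp [blockLiquidation, intervalIntegral.integral_of_le (hδ.le.trans hδt), integral_indicator,
    Measure.restrict_restrict, Ioc_inter_Ioc, hδt, hδ.le]
  field_simp

end

section

variable {α β y z t : ℝ} {ζ : ℝ → ℝ}

lemma intervalIntegrable_mul_exp_holdingsExponent (hζ : IntervalIntegrable ζ volume 0 t) :
    IntervalIntegrable (fun r ↦ ζ r * exp (holdingsExponent α β y z ζ r)) volume 0 t := by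
  have := intervalIntegral.continuousOn_primitive_interval'
    (hζ.continuousOn_mul (g := fun v ↦ exp (β * v)) (by fun_prop)) left_mem_uIcc
  exact hζ.mul_continuousOn (by unfold holdingsExponent; fun_prop)

theorem holdingsValue_le {φ : ℝ} (hα : 0 < α) (hβ : 0 ≤ β) (hy : 0 ≤ y) (ht : 0 ≤ t)
    (hζ : IntervalIntegrable ζ volume 0 t) (hζ₀ : ∀ v, 0 ≤ ζ v) (hζφ : ∫ v in (0 : ℝ)..t, ζ v ≤ φ)
    (hφ : α * φ ≤ z - 2 * y) :
    holdingsValue α β y z t ζ ≤ exp (z - y) * (1 - exp (-(α * φ))) / α := by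
  set ψ : ℝ → ℝ := fun r ↦ ∫ v in (0 : ℝ)..r, ζ v
  have hψ_le (r : ℝ) (hr : r ∈ Icc 0 t) : ψ r ≤ φ :=
    (intervalIntegral.integral_mono_interval le_rfl hr.1 hr.2 (ae_of_all _ hζ₀) hζ).trans hζφ
  have hexponent (r : ℝ) (hr : r ∈ Icc 0 t) : holdingsExponent α β y z ζ r ≤ z - y - α * ψ r := by
    have hζr : IntervalIntegrable ζ volume 0 r :=
      hζ.mono_set (uIcc_subset_uIcc_left (Icc_subset_uIcc hr))
    have hψI : ψ r ≤ ∫ v in (0 : ℝ)..r, exp (β * v) * ζ v :=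
      intervalIntegral.integral_mono_on hr.1 hζr (hζr.continuousOn_mul (by fun_prop)) fun v hv ↦
        le_mul_of_one_le_left (hζ₀ v) (one_le_exp (mul_nonneg hβ hv.1))
    have hexp_sq : exp (-2 * β * r) = exp (-β * r) ^ 2 := by rw [← exp_nat_mul]; ring_nf
    rw [holdingsExponent, hexp_sq]
    refine discounted_exponent_le hα.le hy (exp_pos _).le (exp_le_one_iff.2 ?_) ?_ hψI
    · nlinarith [hr.1]
    · nlinarith [hψ_le r hr]
  calc holdingsValue α β y z t ζ ≤ ∫ r in (0 : ℝ)..t, ζ r * exp (z - y - α * ψ r) :=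
        intervalIntegral.integral_mono_on ht (intervalIntegrable_mul_exp_holdingsExponent hζ)
          (hζ.mul_continuousOn (by
            have := intervalIntegral.continuousOn_primitive_interval' hζ left_mem_uIcc
            fun_prop)) fun r hr ↦ by
            gcongr
            exacts [hζ₀ r, hexponent r hr]
    _ = exp (z - y) * (1 - exp (-(α * ψ t))) / α :=
        intervalIntegral.integral_mul_exp_sub_mul_primitive _ hζ hα.ne'
    _ ≤ exp (z - y) * (1 - exp (-(α * φ))) / α := by
        gcongr

theorem le_holdingsValue_blockLiquidation {φ δ : ℝ} (hα : 0 < α) (hβ : 0 ≤ β)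
    (hy : 0 ≤ y) (hz : 0 ≤ z) (hφ : 0 ≤ φ) (hδ : 0 < δ) (hδt : δ ≤ t) :
    exp (exp (-β * δ) * z - y) * (1 - exp (-(α * exp (β * δ) * φ))) / (α * exp (β * δ)) ≤
      holdingsValue α β y z t (blockLiquidation φ δ) := by
  set ζ := blockLiquidation φ δ
  set ψ : ℝ → ℝ := fun r ↦ ∫ v in (0 : ℝ)..r, ζ v
  have hζ₀ := blockLiquidation_nonneg hφ hδ.le
  have hζ (a b : ℝ) : IntervalIntegrable ζ volume a b :=
    intervalIntegrable_of_norm_le measurable_blockLiquidation.aestronglyMeasurable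
      (fun v ↦ by rw [Real.norm_of_nonneg (hζ₀ v)]; exact blockLiquidation_le hφ hδ.le v) a b
  have hexponent (r : ℝ) (hr : r ∈ Ioc 0 δ) :
      exp (-β * δ) * z - y - α * exp (β * δ) * ψ r ≤ holdingsExponent α β y z ζ r := by
    have hI₀ : 0 ≤ ∫ v in (0 : ℝ)..r, exp (β * v) * ζ v :=
      intervalIntegral.integral_nonneg hr.1.le fun v _ ↦ mul_nonneg (exp_pos _).le (hζ₀ v)
    have hIψ : ∫ v in (0 : ℝ)..r, exp (β * v) * ζ v ≤ exp (β * δ) * ψ r := by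
      rw [← intervalIntegral.integral_const_mul]
      refine intervalIntegral.integral_mono_on hr.1.le ((hζ 0 r).continuousOn_mul (by fun_prop))
        ((hζ 0 r).const_mul _) fun v hv ↦ ?_
      gcongr
      exacts [hζ₀ v, hv.2.trans hr.2]
    have h₁ : exp (-β * δ) ≤ exp (-β * r) := exp_le_exp.2 (by nlinarith [hr.2])
    have h₂ : exp (-β * r) ≤ 1 := exp_le_one_iff.2 (by nlinarith [hr.1])
    have h₃ : exp (-2 * β * r) ≤ 1 := exp_le_one_iff.2 (by nlinarith [hr.1])
    rw [holdingsExponent]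
    nlinarith [mul_le_mul_of_nonneg_right h₁ hz, mul_le_mul_of_nonneg_right h₃ hy,
      mul_le_mul_of_nonneg_left h₂ (mul_nonneg hα.le hI₀), mul_le_mul_of_nonneg_left hIψ hα.le]
  calc exp (exp (-β * δ) * z - y) * (1 - exp (-(α * exp (β * δ) * φ))) / (α * exp (β * δ))
      = ∫ r in (0 : ℝ)..t, ζ r * exp (exp (-β * δ) * z - y - α * exp (β * δ) * ψ r) := by
        rw [intervalIntegral.integral_mul_exp_sub_mul_primitive _ (hζ 0 t) (by positivity),
          integral_blockLiquidation hδ hδt]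
    _ ≤ holdingsValue α β y z t ζ := by
        refine intervalIntegral.integral_mono_on (hδ.le.trans hδt) ?_
          (intervalIntegrable_mul_exp_holdingsExponent (hζ 0 t)) fun r _ ↦ ?_
        · have := intervalIntegral.continuousOn_primitive_interval' (hζ 0 t) left_mem_uIcc
          exact (hζ 0 t).mul_continuousOn (by fun_prop)
        by_cases hr : r ∈ Ioc 0 δ
        · gcongr
          exacts [hζ₀ r, hexponent r hr]
        · simp [ζ, blockLiquidation, hr]

end

theorem small_holdings_value (α β y z t φ : ℝ) (hα : 0 < α) (hβ : 0 < β) (hy : 0 ≤ y)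
    (hz : 2 * y ≤ z) (ht : t ∈ Set.Ioc (0 : ℝ) 1)
    (hφ : φ ∈ Set.Icc 0 ((z - 2 * y) / α)) :
    IsLUB
      { x : ℝ | ∃ ζ : ℝ → ℝ, Measurable ζ ∧ (∀ v, 0 ≤ ζ v) ∧
          (∃ M : ℝ, ∀ v, ζ v ≤ M) ∧
          (∫ v in (0 : ℝ)..t, ζ v) ≤ φ ∧
          x = ∫ r in (0 : ℝ)..t,
            ζ r * Real.exp (Real.exp (-β * r) * z - Real.exp (-2 * β * r) * y
              - α * Real.exp (-β * r) * ∫ v in (0 : ℝ)..r, Real.exp (β * v) * ζ v) }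
      ((1 - Real.exp (-α * φ)) * Real.exp (z - y) / α) := by
  change IsLUB {x | ∃ ζ : ℝ → ℝ, Measurable ζ ∧ (∀ v, 0 ≤ ζ v) ∧ (∃ M : ℝ, ∀ v, ζ v ≤ M) ∧
    (∫ v in (0 : ℝ)..t, ζ v) ≤ φ ∧ x = holdingsValue α β y z t ζ} _
  refine ⟨?_, fun b hb ↦ ?_⟩
  · rintro _ ⟨ζ, hζm, hζ₀, ⟨M, hM⟩, hζφ, rfl⟩
    have hζ := intervalIntegrable_of_norm_le hζm.aestronglyMeasurable
      (fun v ↦ (Real.norm_of_nonneg (hζ₀ v)).trans_le (hM v)) 0 t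
    refine (holdingsValue_le hα hβ.le hy ht.1.le hζ hζ₀ hζφ ?_).trans_eq (by ring_nf)
    linarith [(le_div_iff₀' hα).1 hφ.2]
  · set g : ℝ → ℝ := fun δ ↦
      exp (exp (-β * δ) * z - y) * (1 - exp (-(α * exp (β * δ) * φ))) / (α * exp (β * δ))
    have hg_le (δ : ℝ) (hδ : δ ∈ Ioc 0 t) : g δ ≤ b :=
      (le_holdingsValue_blockLiquidation hα hβ.le hy (by linarith) hφ.1 hδ.1 hδ.2).trans <|
        hb ⟨_, measurable_blockLiquidation, blockLiquidation_nonneg hφ.1 hδ.1.le,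
          ⟨_, blockLiquidation_le hφ.1 hδ.1.le⟩, (integral_blockLiquidation hδ.1 hδ.2).le, rfl⟩
    have hg_lim : Tendsto g (𝓝[>] 0) (𝓝 ((1 - exp (-α * φ)) * exp (z - y) / α)) := by
      have hg : ContinuousAt g 0 := by fun_prop (disch := positivity)
      convert hg.tendsto.mono_left nhdsWithin_le_nhds using 2
      simp [g]
      ring
    exact le_of_tendsto hg_lim (eventually_of_mem (Ioc_mem_nhdsGT ht.1) hg_le)
end

section
/- (Upper bound part of the small-holdings theorem) Let α > 0, β > 0, y ≥ 0, z ≥ 2y, φ ≤ (z-2y)/α, t ∈ (0,1]. For any nonnegative integrable ζ on [0,t] with η_r = ∫₀ʳ ζ_v dv ≤ φ, it holds that ∫₀ᵗ ζ_r·exp(e^{-βr}z - e^{-2βr}y - αe^{-βr}η_r) dr ≤ (1 - e^{-αφ})·e^{z-y}/α. -/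
/-!
For `r ≥ 0` put `e = exp (-β r) ≤ 1`. The exponent `e z - e² y - α e η_r` is at most
`z - y - α η_r`, since the difference is `(1 - e) (z - (1 + e) y - α η_r) ≥ 0`. This reduces the
claim to `∫₀ᵗ ζ exp (-α η) = (1 - exp (-α η_t)) / α`, which is the chain rule for the absolutely
continuous primitive `η` of `ζ`, and to `η_t ≤ φ`.
-/

open Real MeasureTheory Set Filter

theorem LipschitzOnWith.comp_absolutelyContinuousOnInterval {X Y : Type*} [PseudoMetricSpace X]
    [PseudoMetricSpace Y] {g : X → Y} {K : NNReal} {s : Set X} {f : ℝ → X} {a b : ℝ}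
    (hg : LipschitzOnWith K g s) (hfs : MapsTo f (uIcc a b) s)
    (hf : AbsolutelyContinuousOnInterval f a b) :
    AbsolutelyContinuousOnInterval (g ∘ f) a b := by
  have hKf := (tendsto_const_nhds (x := (K : ℝ))).mul hf
  rw [mul_zero] at hKf
  refine squeeze_zero' (Eventually.of_forall fun _ ↦ Finset.sum_nonneg fun _ _ ↦ dist_nonneg)
    ?_ hKf
  filter_upwards [mem_inf_of_right (mem_principal_self _)] with E hE
  rw [Finset.mul_sum]
  gcongr with i hi
  exact hg.dist_le_mul _ (hfs (hE.1 i hi).1) _ (hfs (hE.1 i hi).2)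

theorem ContDiff.comp_absolutelyContinuousOnInterval {g f : ℝ → ℝ} {a b : ℝ}
    (hg : ContDiff ℝ 1 g) (hf : AbsolutelyContinuousOnInterval f a b) :
    AbsolutelyContinuousOnInterval (g ∘ f) a b := by
  obtain ⟨C, hC⟩ := hf.exists_bound
  obtain ⟨K, hK⟩ := hg.contDiffOn.exists_lipschitzOnWith one_ne_zero (convex_Icc (-C) C)
    isCompact_Icc
  exact hK.comp_absolutelyContinuousOnInterval (fun x hx ↦ abs_le.mp (hC x hx)) hf

theorem integral_deriv_comp_primitive_mul {ζ g : ℝ → ℝ} {a b : ℝ}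
    (hζ : IntervalIntegrable ζ volume a b) (hg : ContDiff ℝ 1 g) :
    ∫ r in a..b, deriv g (∫ v in a..r, ζ v) * ζ r = g (∫ v in a..b, ζ v) - g 0 := by
  have hη := hζ.absolutelyContinuousOnInterval_intervalIntegral left_mem_uIcc
  have hgη := hg.comp_absolutelyContinuousOnInterval hη
  calc ∫ r in a..b, deriv g (∫ v in a..r, ζ v) * ζ r
      = ∫ r in a..b, deriv (g ∘ fun x ↦ ∫ v in a..x, ζ v) r := by
        refine intervalIntegral.integral_congr_ae ?_
        filter_upwards [hζ.ae_hasDerivAt_integral] with r hr hrab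
        exact (((hg.differentiable one_ne_zero _).hasDerivAt).comp r
          (hr (uIoc_subset_uIcc hrab) a left_mem_uIcc)).deriv.symm
    _ = g (∫ v in a..b, ζ v) - g 0 := by
        rw [hgη.integral_deriv_eq_sub, Function.comp_apply, Function.comp_apply,
          intervalIntegral.integral_same]

theorem integral_mul_exp_neg_primitive {ζ : ℝ → ℝ} {a b α : ℝ}
    (hζ : IntervalIntegrable ζ volume a b) (hα : α ≠ 0) :
    ∫ r in a..b, ζ r * exp (-α * ∫ v in a..r, ζ v) = (1 - exp (-α * ∫ v in a..b, ζ v)) / α := by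
  have hderiv (s : ℝ) : deriv (fun s ↦ -exp (-α * s) / α) s = exp (-α * s) := by
    have h : HasDerivAt (fun s ↦ -exp (-α * s) / α) (-(exp (-α * s) * (-α * 1)) / α) s :=
      (((hasDerivAt_id s).const_mul (-α)).exp.neg).div_const α
    rw [h.deriv]
    field_simp
  have := integral_deriv_comp_primitive_mul (g := fun s ↦ -exp (-α * s) / α) hζ (by fun_prop)
  simp only [hderiv, mul_zero, exp_zero] at this
  simp_rw [mul_comm (ζ _)]
  rw [this]
  ring

theorem mul_sub_sq_mul_sub_mul_le {e y z a : ℝ} (he : e ≤ 1) (hy : 0 ≤ y) (ha : a ≤ z - 2 * y) :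
    e * z - e ^ 2 * y - e * a ≤ z - y - a := by
  have hfactor : 0 ≤ z - (1 + e) * y - a := by nlinarith [mul_nonneg (sub_nonneg.2 he) hy]
  nlinarith [mul_nonneg (sub_nonneg.2 he) hfactor]

theorem exp_discounted_exponent_le {α β r y z x : ℝ} (hβ : 0 ≤ β) (hr : 0 ≤ r) (hy : 0 ≤ y)
    (hx : α * x ≤ z - 2 * y) :
    exp (exp (-β * r) * z - exp (-2 * β * r) * y - α * exp (-β * r) * x)
      ≤ exp (z - y) * exp (-α * x) := by
  have he : exp (-β * r) ≤ 1 := exp_le_one_iff.2 (by nlinarith)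
  have hsq : exp (-2 * β * r) = exp (-β * r) ^ 2 := by rw [← exp_nat_mul]; ring_nf
  rw [← exp_add, exp_le_exp, hsq]
  linarith [mul_sub_sq_mul_sub_mul_le he hy hx]

theorem small_holdings_upper_bound_general (α β y z t φ : ℝ) (hα : 0 < α) (hβ : 0 < β)
    (hy : 0 ≤ y) (ht : t ∈ Set.Ioc (0 : ℝ) 1)
    (hφ : α * φ ≤ z - 2 * y)
    (ζ : ℝ → ℝ) (hζpos : ∀ v, 0 ≤ ζ v)
    (hζint : IntegrableOn ζ (Set.Icc 0 t))
    (η : ℝ → ℝ) (hη : ∀ r, η r = ∫ v in (0 : ℝ)..r, ζ v)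
    (hηφ : ∀ r ∈ Set.Icc 0 t, η r ≤ φ) :
    (∫ r in (0 : ℝ)..t,
        ζ r * Real.exp (Real.exp (-β * r) * z - Real.exp (-2 * β * r) * y
          - α * Real.exp (-β * r) * η r))
      ≤ (1 - Real.exp (-α * φ)) * Real.exp (z - y) / α := by
  obtain ⟨h0t, -⟩ := ht
  have hζi : IntervalIntegrable ζ volume 0 t :=
    (intervalIntegrable_iff_integrableOn_Icc_of_le h0t.le).2 hζint
  have hηc : ContinuousOn η (uIcc 0 t) := by
    rw [funext hη]
    exact intervalIntegral.continuousOn_primitive_interval (uIcc_of_le h0t.le ▸ hζint)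
  have hpointwise : ∀ r ∈ Icc 0 t, ζ r * exp (exp (-β * r) * z - exp (-2 * β * r) * y
      - α * exp (-β * r) * η r) ≤ exp (z - y) * (ζ r * exp (-α * η r)) := fun r hr ↦ by
    rw [mul_left_comm]
    exact mul_le_mul_of_nonneg_left (exp_discounted_exponent_le hβ.le hr.1 hy
      ((mul_le_mul_of_nonneg_left (hηφ r hr) hα.le).trans hφ)) (hζpos r)
  have hprimitive : ∫ r in (0 : ℝ)..t, ζ r * exp (-α * η r) = (1 - exp (-α * η t)) / α := by
    simp only [hη]
    exact integral_mul_exp_neg_primitive hζi hα.ne'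
  calc _ ≤ ∫ r in (0 : ℝ)..t, exp (z - y) * (ζ r * exp (-α * η r)) :=
        intervalIntegral.integral_mono_on h0t.le (hζi.mul_continuousOn (by fun_prop))
          ((hζi.mul_continuousOn (by fun_prop)).const_mul _) hpointwise
    _ = exp (z - y) * ((1 - exp (-α * η t)) / α) := by
        rw [intervalIntegral.integral_const_mul, hprimitive]
    _ ≤ exp (z - y) * ((1 - exp (-α * φ)) / α) := by
        gcongr exp (z - y) * ((1 - exp ?_) / α)
        nlinarith [hηφ t ⟨h0t.le, le_rfl⟩]
    _ = (1 - exp (-α * φ)) * exp (z - y) / α := by ring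

theorem small_holdings_upper_bound (α β y z t φ : ℝ) (hα : 0 < α) (hβ : 0 < β)
    (hy : 0 ≤ y) (hz : 2 * y ≤ z) (ht : t ∈ Set.Ioc (0 : ℝ) 1)
    (hφ : α * φ ≤ z - 2 * y)
    (ζ : ℝ → ℝ) (hζpos : ∀ v, 0 ≤ ζ v)
    (hζint : IntegrableOn ζ (Set.Icc 0 t))
    (η : ℝ → ℝ) (hη : ∀ r, η r = ∫ v in (0 : ℝ)..r, ζ v)
    (hηφ : ∀ r ∈ Set.Icc 0 t, η r ≤ φ) :
    (∫ r in (0 : ℝ)..t,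
        ζ r * Real.exp (Real.exp (-β * r) * z - Real.exp (-2 * β * r) * y
          - α * Real.exp (-β * r) * η r))
      ≤ (1 - Real.exp (-α * φ)) * Real.exp (z - y) / α :=
  small_holdings_upper_bound_general α β y z t φ hα hβ hy ht hφ ζ hζpos hζint η hη hηφ
end

section
/- (Lemma: coercivity of the partial-sum constraints) Fix n ≥ 1, 0 < c < 1, and φ ∈ ℝ. Let Ξ = {x ∈ ℝⁿ : x₀ + ⋯ + x_{n-1} = φ} and for x ∈ Ξ let Q̃_k(x) = Σ_{m=0}^{k} c^{k-m} x_m. Then min_{k=0,…,n-1} Q̃_k(x) → -∞ as |x| → ∞ on Ξ; equivalently, for every M > 0 there exists C > 0 (depending on n, c, M, φ) such that if x ∈ Ξ and min_k Q̃_k(x) ≥ -M then |x_k| ≤ C for all k. -/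
open Finset

theorem partial_sum_coercivity (n : ℕ) (hn : 1 ≤ n) (c : ℝ) (hc : c ∈ Set.Ioo (0 : ℝ) 1)
    (φ : ℝ) :
    ∀ M > (0 : ℝ), ∃ C > (0 : ℝ), ∀ x : ℕ → ℝ,
      (∑ i ∈ Finset.range n, x i) = φ →
      (∀ k < n, -M ≤ ∑ m ∈ Finset.range (k + 1), c ^ (k - m) * x m) →
      ∀ k < n, |x k| ≤ C := by
  obtain ⟨hc0, hc1⟩ := hc
  intro M hM
  have h1c : (0:ℝ) < 1 - c := by linarith
  set B : ℝ := (|φ| + ((n:ℝ)+1)*M)/(1-c) with hBdef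
  have hnum : (0:ℝ) < |φ| + ((n:ℝ)+1)*M := by
    have := abs_nonneg φ
    have : (0:ℝ) < ((n:ℝ)+1)*M := by positivity
    linarith [abs_nonneg φ]
  have hBpos : 0 < B := div_pos hnum h1c
  refine ⟨2*(M+B), by positivity, ?_⟩
  intro x hsum hS
  set S : ℕ → ℝ := fun k => ∑ m ∈ Finset.range (k + 1), c ^ (k - m) * x m with hSdef
  have hS' : ∀ k < n, -M ≤ S k := hS
  have hrec : ∀ k, S (k+1) = x (k+1) + c * S k := by
    intro k
    have hterm : ∀ m ∈ Finset.range (k+1), c^(k+1-m)*x m = c * (c^(k-m)*x m) := by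
      intro m hm
      have hm' : m ≤ k := Nat.lt_succ_iff.mp (Finset.mem_range.mp hm)
      rw [show k+1-m = (k-m)+1 from by omega, pow_succ]
      ring
    simp only [hSdef]
    rw [Finset.sum_range_succ, Finset.sum_congr rfl hterm, ← Finset.mul_sum]
    simp [Nat.sub_self]
    ring
  have hkey : ∀ m, S m + (1-c) * ∑ k ∈ Finset.range m, S k = ∑ i ∈ Finset.range (m+1), x i := by
    intro m
    induction m with
    | zero => simp [hSdef]
    | succ m ih =>
      rw [Finset.sum_range_succ (f := S), Finset.sum_range_succ (f := x), hrec m]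
      linarith [ih]
  have hn1 : n - 1 + 1 = n := Nat.succ_pred_eq_of_pos hn
  have hφ : S (n-1) + (1-c) * ∑ k ∈ Finset.range (n-1), S k = φ := by
    rw [hkey (n-1), hn1, hsum]
  have hcard : ∀ s : Finset ℕ, s ⊆ Finset.range (n-1) → -((n:ℝ)*M) ≤ ∑ k ∈ s, S k := by
    intro s hs
    have h1 : ∑ k ∈ s, (-M) ≤ ∑ k ∈ s, S k := by
      apply Finset.sum_le_sum
      intro k hk
      exact hS' k (by have := Finset.mem_range.mp (hs hk); omega)
    have h2 : (s.card : ℝ) ≤ (n:ℝ) := by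
      have := Finset.card_le_card hs
      rw [Finset.card_range] at this
      exact_mod_cast le_trans this (Nat.sub_le n 1)
    calc -((n:ℝ)*M) ≤ -((s.card:ℝ) * M) := by nlinarith
      _ = ∑ k ∈ s, (-M) := by rw [Finset.sum_const, nsmul_eq_mul]; ring
      _ ≤ _ := h1
  have hnM : (0:ℝ) ≤ (n:ℝ)*M := by positivity
  have hcnM : (0:ℝ) ≤ c * ((n:ℝ)*M) := by positivity
  have hBc : B * (1-c) = |φ| + ((n:ℝ)+1)*M := by
    rw [hBdef, div_mul_cancel₀ _ (ne_of_gt h1c)]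
  have hub : ∀ j, j < n → S j ≤ B := by
    intro j hj
    by_cases hje : j = n - 1
    · subst hje
      have hT : -((n:ℝ)*M) ≤ ∑ k ∈ Finset.range (n-1), S k := hcard _ (subset_refl _)
      have h3 : (1-c) * (-((n:ℝ)*M)) ≤ (1-c) * ∑ k ∈ Finset.range (n-1), S k :=
        mul_le_mul_of_nonneg_left hT (le_of_lt h1c)
      have hφle : φ ≤ |φ| := le_abs_self φ
      nlinarith [mul_pos hBpos hc0]
    · have hjlt : j < n - 1 := by omega
      have hjmem : j ∈ Finset.range (n-1) := Finset.mem_range.mpr hjlt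
      have hsplit : ∑ k ∈ (Finset.range (n-1)).erase j, S k + S j
          = ∑ k ∈ Finset.range (n-1), S k := Finset.sum_erase_add _ _ hjmem
      have hT : -((n:ℝ)*M) ≤ ∑ k ∈ (Finset.range (n-1)).erase j, S k :=
        hcard _ (Finset.erase_subset _ _)
      have h3 : (1-c) * (-((n:ℝ)*M)) ≤ (1-c) * ∑ k ∈ (Finset.range (n-1)).erase j, S k :=
        mul_le_mul_of_nonneg_left hT (le_of_lt h1c)
      have hSn : -M ≤ S (n-1) := hS' (n-1) (by omega)
      have hφle : φ ≤ |φ| := le_abs_self φ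
      have h4 : (1-c) * S j ≤ |φ| + ((n:ℝ)+1)*M := by nlinarith
      have h5 : (1-c) * S j ≤ (1-c) * B := by
        rw [mul_comm (1-c) B] at *
        linarith [hBc]
      exact le_of_mul_le_mul_left h5 h1c
  have habsS : ∀ j, j < n → |S j| ≤ M + B := by
    intro j hj
    rw [abs_le]
    constructor
    · linarith [hS' j hj, hBpos]
    · linarith [hub j hj, hM]
  intro k hk
  cases k with
  | zero =>
    have hS0 : S 0 = x 0 := by simp [hSdef]
    have := habsS 0 hk
    rw [hS0] at this
    linarith [hBpos, hM]
  | succ j =>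
    have hx : x (j+1) = S (j+1) - c * S j := by linarith [hrec j]
    have h1 := habsS (j+1) hk
    have h2 := habsS j (by omega)
    calc |x (j+1)| = |S (j+1) - c * S j| := by rw [hx]
      _ ≤ |S (j+1)| + |c * S j| := abs_sub _ _
      _ = |S (j+1)| + c * |S j| := by rw [abs_mul, abs_of_pos hc0]
      _ ≤ (M+B) + 1 * (M+B) := by
          have : c * |S j| ≤ 1 * (M+B) := by
            have := abs_nonneg (S j)
            nlinarith
          linarith
      _ = 2*(M+B) := by ring
end

section
/- (Lemma: divergence of the discrete objective) Fix n ≥ 1, 0 < c < 1, α > 0, y ≥ 0, z ∈ ℝ, φ ∈ ℝ. For x ∈ ℝⁿ define f̃ⁿ(x) = Σ_{k=0}^{n-1} exp(c^k z - c^{2k} y - α Σ_{l=0}^{k-1} c^{k-l} x_l)·(1 - e^{-α x_k}). Then f̃ⁿ(x) → -∞ as |x| → ∞ on the hyperplane {x : x₀+⋯+x_{n-1} = φ}. -/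
open Finset Real

private lemma aux_negabs_le_pow_mul (c z : ℝ) (h0 : 0 ≤ c) (h1 : c ≤ 1) (k : ℕ) :
    -|z| ≤ c ^ k * z := by
  have hp0 : 0 ≤ c ^ k := pow_nonneg h0 _
  have hp1 : c ^ k ≤ 1 := pow_le_one₀ h0 h1
  rcases le_or_gt 0 z with hz | hz
  · have := mul_nonneg hp0 hz
    linarith [abs_nonneg z]
  · rw [abs_of_neg hz]
    nlinarith

private lemma aux_pow_mul_le_self (c y : ℝ) (h0 : 0 ≤ c) (h1 : c ≤ 1) (hy : 0 ≤ y) (k : ℕ) :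
    c ^ k * y ≤ y := by
  have hp0 : 0 ≤ c ^ k := pow_nonneg h0 _
  have hp1 : c ^ k ≤ 1 := pow_le_one₀ h0 h1
  nlinarith

set_option maxHeartbeats 2000000 in
theorem discrete_objective_divergence (n : ℕ) (hn : 1 ≤ n) (c : ℝ)
    (hc : c ∈ Set.Ioo (0 : ℝ) 1) (α y z φ : ℝ) (hα : 0 < α) (hy : 0 ≤ y)
    (f : (ℕ → ℝ) → ℝ)
    (hf : ∀ x, f x = ∑ k ∈ Finset.range n,
        Real.exp (c ^ k * z - c ^ (2 * k) * y
          - α * ∑ l ∈ Finset.range k, c ^ (k - l) * x l)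
        * (1 - Real.exp (-α * x k))) :
    ∀ M : ℝ, ∃ R : ℝ, ∀ x : ℕ → ℝ,
      (∑ i ∈ Finset.range n, x i) = φ →
      R ≤ (∑ i ∈ Finset.range n, |x i|) →
      f x ≤ -M := by
  obtain ⟨hc0, hc1⟩ := hc
  obtain ⟨m, rfl⟩ : ∃ m, n = m + 1 := ⟨n - 1, by omega⟩
  intro M
  have hc1' : (0:ℝ) < 1 - c := by linarith
  obtain ⟨g₀, hg₀⟩ : ∃ t : ℝ, t = (y + 1) / (1 - c) := ⟨_, rfl⟩
  have hg₀pos : 0 < g₀ := by rw [hg₀]; positivity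
  obtain ⟨B, hB⟩ : ∃ t : ℝ, t = Real.exp (y + g₀) := ⟨_, rfl⟩
  have hBpos : 0 < B := hB ▸ Real.exp_pos _
  obtain ⟨K, hK⟩ : ∃ t : ℝ, t = M + Real.exp |z| + ((m:ℝ) + 1) * B := ⟨_, rfl⟩
  obtain ⟨W, hW⟩ : ∃ t : ℝ, t = max 1 (2 * K) := ⟨_, rfl⟩
  have hWpos : (0:ℝ) < W := by
    rw [hW]; exact lt_of_lt_of_le one_pos (le_max_left _ _)
  obtain ⟨Γ, hΓ⟩ : ∃ t : ℝ, t = max g₀ (Real.log W) := ⟨_, rfl⟩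
  have hΓg₀ : g₀ ≤ Γ := hΓ ▸ le_max_left _ _
  have hΓlog : Real.log W ≤ Γ := hΓ ▸ le_max_right _ _
  have hΓ0 : 0 ≤ Γ := le_trans hg₀pos.le hΓg₀
  obtain ⟨T, hT⟩ : ∃ t : ℝ, t = (Γ + |z| + y) / α := ⟨_, rfl⟩
  have hT0 : 0 ≤ T := by
    rw [hT]
    apply div_nonneg _ hα.le
    have := abs_nonneg z
    linarith
  have hαT : α * T = Γ + |z| + y := by
    rw [hT, mul_div_cancel₀ _ hα.ne']
  obtain ⟨A, hA⟩ : ∃ A : ℝ → ℝ, A = fun g => Real.exp (y + c * g) - Real.exp g := ⟨_, rfl⟩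
  -- global upper bound on A
  have hA_bound : ∀ g : ℝ, A g ≤ B := by
    intro g
    rcases le_or_gt g g₀ with h | h
    · have h1 : Real.exp (y + c * g) ≤ Real.exp (y + g₀) := by
        apply Real.exp_le_exp.mpr
        rcases le_or_gt g 0 with hg | hg
        · have : c * g ≤ 0 := mul_nonpos_of_nonneg_of_nonpos hc0.le hg
          linarith
        · have : c * g ≤ 1 * g := mul_le_mul_of_nonneg_right hc1.le hg.le
          linarith
      have h2 := Real.exp_pos g
      simp only [hA, hB]
      linarith
    · have h1 : Real.exp (y + c * g) ≤ Real.exp g := by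
        apply Real.exp_le_exp.mpr
        have h3 : y + 1 < g * (1 - c) := by
          rw [hg₀] at h
          exact (div_lt_iff₀ hc1').mp h
        nlinarith
      simp only [hA]
      have := Real.exp_pos (y + g₀)
      rw [hB]
      linarith
  -- A is very negative for large arguments
  have hA_neg : ∀ g : ℝ, Γ ≤ g → A g ≤ -K := by
    intro g hg
    have hgg₀ : g₀ ≤ g := le_trans hΓg₀ hg
    have h2e : (2:ℝ) ≤ Real.exp 1 := by
      have := Real.add_one_le_exp 1; linarith
    have h1 : Real.exp (y + c * g) ≤ (1/2) * Real.exp g := by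
      rw [show y + c * g = (y - (1-c)*g) + g by ring, Real.exp_add]
      have hle : y - (1-c)*g ≤ -1 := by
        have h3 : y + 1 ≤ g * (1 - c) := by
          rw [hg₀] at hgg₀
          exact (div_le_iff₀ hc1').mp hgg₀
        nlinarith
      have h4 : Real.exp (y - (1-c)*g) ≤ Real.exp (-1) := Real.exp_le_exp.mpr hle
      have h5 : Real.exp (-1) ≤ 1/2 := by
        rw [Real.exp_neg]
        rw [inv_le_comm₀ (Real.exp_pos 1) (by norm_num)]
        simpa using h2e
      nlinarith [Real.exp_pos g, (Real.exp_pos (y - (1-c)*g)).le]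
    have h2 : W ≤ Real.exp g := by
      calc W = Real.exp (Real.log W) := (Real.exp_log hWpos).symm
        _ ≤ Real.exp g := Real.exp_le_exp.mpr (le_trans hΓlog hg)
    have h3 : 2 * K ≤ W := hW ▸ le_max_right _ _
    simp only [hA]
    linarith
  refine ⟨2 * ((|φ| + T)/(1-c) + (|φ| + (m:ℝ)*T) + 2*((m:ℝ)+1)*T) + 1, ?_⟩
  intro x hφ hR
  obtain ⟨L, hL⟩ : ∃ L : ℕ → ℝ, L = fun k => ∑ l ∈ Finset.range (k+1), c ^ (k - l) * x l :=
    ⟨_, rfl⟩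
  have hS : ∀ k, (∑ l ∈ Finset.range (k+1), c ^ (k + 1 - l) * x l) = c * L k := by
    intro k
    simp only [hL, Finset.mul_sum]
    apply Finset.sum_congr rfl
    intro l hl
    rw [Finset.mem_range] at hl
    rw [show k + 1 - l = (k - l) + 1 by omega, pow_succ]
    ring
  have hLsucc : ∀ k, L (k+1) = c * L k + x (k+1) := by
    intro k
    have h1 : L (k+1) = (∑ l ∈ Finset.range (k+1), c ^ (k + 1 - l) * x l)
        + c ^ (k + 1 - (k+1)) * x (k+1) := by
      simp only [hL]
      rw [Finset.sum_range_succ]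
    rw [h1, hS]
    simp
  have key : ∀ j : ℕ, ∑ k ∈ Finset.range (j+1), x k
      = L j + (1-c) * ∑ k ∈ Finset.range j, L k := by
    intro j
    induction j with
    | zero => simp [hL]
    | succ j ih =>
      rw [Finset.sum_range_succ, ih, Finset.sum_range_succ, hLsucc]
      ring
  obtain ⟨G, hG⟩ : ∃ G : ℕ → ℝ, G = fun k => c ^ k * z - c ^ (2*k) * y - α * L k := ⟨_, rfl⟩
  by_cases hex : ∃ k, k ≤ m ∧ L k ≤ -T
  · -- main case : some L k is very negative
    obtain ⟨k₀, hk₀m, hk₀L⟩ := hex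
    obtain ⟨a, ha⟩ : ∃ a : ℕ → ℝ, a = fun k => Real.exp (c ^ k * z - c ^ (2*k) * y
        - α * ∑ l ∈ Finset.range k, c ^ (k - l) * x l) := ⟨_, rfl⟩
    have hfx : f x = ∑ k ∈ Finset.range (m+1), (a k - Real.exp (G k)) := by
      rw [hf]
      apply Finset.sum_congr rfl
      intro k _
      have harg : (c ^ k * z - c ^ (2 * k) * y - α * ∑ l ∈ Finset.range k, c ^ (k - l) * x l)
          + -α * x k = c ^ k * z - c ^ (2*k) * y - α * L k := by
        simp only [hL]
        rw [Finset.sum_range_succ, Nat.sub_self, pow_zero, one_mul]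
        ring
      rw [mul_sub, mul_one, ← Real.exp_add, harg]
      simp only [ha, hG]
    have htel : f x = a 0 - Real.exp (G m)
        + ∑ k ∈ Finset.range m, (a (k+1) - Real.exp (G k)) := by
      rw [hfx, Finset.sum_sub_distrib,
        Finset.sum_range_succ' (fun k => a k) m,
        Finset.sum_range_succ (fun k => Real.exp (G k)) m,
        Finset.sum_sub_distrib]
      ring
    have ha0 : a 0 ≤ Real.exp |z| := by
      simp only [ha, Finset.range_zero, Finset.sum_empty, pow_zero, mul_zero, one_mul,
        Nat.mul_zero, sub_zero]
      apply Real.exp_le_exp.mpr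
      have := le_abs_self z
      linarith
    have hstep : ∀ k, a (k+1) ≤ Real.exp (y + c * G k) := by
      intro k
      simp only [ha, hG]
      rw [hS k]
      apply Real.exp_le_exp.mpr
      have e1 : c ^ (k+1) = c ^ k * c := pow_succ c k
      have e2 : c ^ (2*(k+1)) = c ^ (2*k) * c * c := by
        rw [show 2*(k+1) = (2*k + 1) + 1 by ring, pow_succ, pow_succ]
      have e3 : (0:ℝ) ≤ c ^ (2*k) := pow_nonneg hc0.le _
      have e4 : c ^ (2*k) ≤ 1 := pow_le_one₀ hc0.le hc1.le
      have e5 : c ^ (2*k) * c ≤ 1 := mul_le_one₀ e4 hc0.le hc1.le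
      have e6 : (0:ℝ) ≤ c ^ (2*k) * c := mul_nonneg e3 hc0.le
      have e7 : c ^ (2*k) * c * (1 - c) ≤ 1 :=
        mul_le_one₀ e5 hc1'.le (by linarith)
      have e9 : c ^ (2*k) * c * (1 - c) * y ≤ y := by
        have h := mul_le_mul_of_nonneg_right e7 hy
        rw [one_mul] at h
        exact h
      rw [e1, e2]
      linarith [e9]
    have hsum : f x ≤ Real.exp |z| + ∑ k ∈ Finset.range (m+1), A (G k) := by
      rw [htel, Finset.sum_range_succ (fun k => A (G k))]
      have h1 : ∑ k ∈ Finset.range m, (a (k+1) - Real.exp (G k))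
          ≤ ∑ k ∈ Finset.range m, A (G k) :=
        Finset.sum_le_sum fun k _ => by
          have := hstep k; simp only [hA]; linarith
      have h2 : -Real.exp (G m) ≤ A (G m) := by
        have := (Real.exp_pos (y + c * G m)).le
        simp only [hA]; linarith
      linarith
    have hGk₀ : Γ ≤ G k₀ := by
      have h1 : -|z| ≤ c ^ k₀ * z := aux_negabs_le_pow_mul c z hc0.le hc1.le k₀
      have h2 : c ^ (2*k₀) * y ≤ y := aux_pow_mul_le_self c y hc0.le hc1.le hy (2*k₀)
      have h4 : α * T ≤ α * (-L k₀) := by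
        apply mul_le_mul_of_nonneg_left _ hα.le
        linarith
      rw [hαT] at h4
      simp only [hG]
      linarith
    have hk₀mem : k₀ ∈ Finset.range (m+1) := Finset.mem_range.mpr (by omega)
    have hsplit : ∑ k ∈ Finset.range (m+1), A (G k)
        = A (G k₀) + ∑ k ∈ (Finset.range (m+1)).erase k₀, A (G k) :=
      (Finset.add_sum_erase _ _ hk₀mem).symm
    have herase : ∑ k ∈ (Finset.range (m+1)).erase k₀, A (G k) ≤ (m:ℝ) * B := by
      calc ∑ k ∈ (Finset.range (m+1)).erase k₀, A (G k)
          ≤ ∑ k ∈ (Finset.range (m+1)).erase k₀, B :=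
            Finset.sum_le_sum fun k _ => hA_bound (G k)
        _ = (m:ℝ) * B := by
            rw [Finset.sum_const, Finset.card_erase_of_mem hk₀mem, Finset.card_range]
            simp [nsmul_eq_mul]
    have hAneg := hA_neg (G k₀) hGk₀
    rw [hK] at hAneg
    calc f x ≤ Real.exp |z| + ∑ k ∈ Finset.range (m+1), A (G k) := hsum
      _ = Real.exp |z| + A (G k₀) + ∑ k ∈ (Finset.range (m+1)).erase k₀, A (G k) := by
          rw [hsplit]; ring
      _ ≤ -M := by linarith
  · -- coercivity case: all L k > -T forces the norm to be bounded, contradiction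
    exfalso
    push_neg at hex
    have hφ' : φ = L m + (1-c) * ∑ k ∈ Finset.range m, L k := by
      rw [← hφ, key m]
    have hsum_lb : -((m:ℝ) * T) ≤ ∑ k ∈ Finset.range m, L k := by
      have h1 : ∑ k ∈ Finset.range m, (-T) ≤ ∑ k ∈ Finset.range m, L k :=
        Finset.sum_le_sum fun k hk =>
          (hex k (by have := Finset.mem_range.mp hk; omega)).le
      rw [Finset.sum_const, Finset.card_range] at h1
      simpa [nsmul_eq_mul] using h1
    have hmT : 0 ≤ (m:ℝ) * T := mul_nonneg (Nat.cast_nonneg m) hT0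
    have hLm_ub : L m ≤ |φ| + (m:ℝ) * T := by
      nlinarith [hsum_lb, hmT, mul_nonneg hc0.le hmT, le_abs_self φ]
    have hsum_ub : ∑ k ∈ Finset.range m, L k ≤ (|φ| + T)/(1-c) := by
      rw [le_div_iff₀ hc1']
      linarith [hex m le_rfl, le_abs_self φ, hφ']
    have habsL : ∀ k, k ≤ m → |L k| ≤ L k + 2*T := by
      intro k hk
      have h1 := hex k hk
      rcases abs_cases (L k) with ⟨h, _⟩ | ⟨h, _⟩ <;> rw [h] <;> linarith
    have hsL : ∑ k ∈ Finset.range (m+1), L k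
        ≤ (|φ| + T)/(1-c) + (|φ| + (m:ℝ)*T) := by
      rw [Finset.sum_range_succ]
      linarith
    have hsAbsL : ∑ k ∈ Finset.range (m+1), |L k|
        ≤ (|φ| + T)/(1-c) + (|φ| + (m:ℝ)*T) + 2*((m:ℝ)+1)*T := by
      have h1 : ∑ k ∈ Finset.range (m+1), |L k|
          ≤ ∑ k ∈ Finset.range (m+1), (L k + 2*T) :=
        Finset.sum_le_sum fun k hk =>
          habsL k (by have := Finset.mem_range.mp hk; omega)
      rw [Finset.sum_add_distrib, Finset.sum_const, Finset.card_range] at h1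
      simp only [nsmul_eq_mul] at h1
      push_cast at h1
      linarith
    have hxL : ∑ k ∈ Finset.range (m+1), |x k|
        ≤ 2 * ∑ k ∈ Finset.range (m+1), |L k| := by
      rw [Finset.sum_range_succ' (fun k => |x k|) m]
      have h0 : |x 0| = |L 0| := by simp [hL]
      have h1 : ∑ k ∈ Finset.range m, |x (k+1)|
          ≤ ∑ k ∈ Finset.range m, (|L (k+1)| + |L k|) := by
        apply Finset.sum_le_sum
        intro k _
        have hx1 : x (k+1) = L (k+1) - c * L k := by
          have := hLsucc k; linarith
        have habs : |x (k+1)| ≤ |L (k+1)| + c * |L k| := by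
          rw [hx1]
          calc |L (k+1) - c * L k| ≤ |L (k+1)| + |c * L k| := abs_sub _ _
            _ = |L (k+1)| + c * |L k| := by rw [abs_mul, abs_of_pos hc0]
        nlinarith [abs_nonneg (L k)]
      have h2 : ∑ k ∈ Finset.range m, (|L (k+1)| + |L k|)
          = (∑ k ∈ Finset.range m, |L (k+1)|) + ∑ k ∈ Finset.range m, |L k| :=
        Finset.sum_add_distrib
      have h3 : (∑ k ∈ Finset.range m, |L (k+1)|) + |L 0|
          = ∑ k ∈ Finset.range (m+1), |L k| :=
        (Finset.sum_range_succ' (fun k => |L k|) m).symm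
      have h4 : ∑ k ∈ Finset.range m, |L k| ≤ ∑ k ∈ Finset.range (m+1), |L k| := by
        rw [Finset.sum_range_succ]
        have := abs_nonneg (L m)
        linarith
      linarith
    linarith
end

section
/- (Gradient recursion, Lemma 5 of the paper) Fix n ≥ 2, c ∈ (0,1), α > 0, y ≥ 0, z ∈ ℝ, and let f̃ⁿ(x) = Σ_{k=0}^{n-1} exp(c^k z - c^{2k} y - α Σ_{l=0}^{k-1} c^{k-l}x_l)(1 - e^{-αx_k}). Then for each k = 0,…,n-2, ∂f̃ⁿ/∂x_k (x) = c·∂f̃ⁿ/∂x_{k+1}(x) + α(1-c)·exp(-c^{2k}y)·F_k(Σ_{l=0}^{k} c^{k-l}x_l - c^k z/α), where F_k(u) = (exp(-αu) - c·exp(-αcu - c^{2k}(c²-1)y))/(1-c). -/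
/-!
Write `E_j(x) = exp (c^j z - c^{2j} y - α Σ_{l<j} c^{j-l} x_l)`, so that `f = Σ_j E_j (1 - e^{-α x_j})`.
For `j > k` we have `∂_k E_j = -α c^{j-k} E_j`, hence `∂_k f = α e^{-α x_k} E_k - α T_k` with the
tail `T_k = Σ_{j>k} c^{j-k} E_j (1 - e^{-α x_{j}})`. Since `T_k = c E_{k+1} (1 - e^{-α x_{k+1}}) + c T_{k+1}`,
the tails cancel in `∂_k f - c ∂_{k+1} f = α (e^{-α x_k} E_k - c E_{k+1})`, and both exponentials are
`exp (-c^{2k} y)` times a function of `u = Σ_{l≤k} c^{k-l} x_l - c^k z / α`, which gives `F_k(u)`.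
-/

open Finset Real Function

section PartialDerivatives

variable {𝕜 ι : Type*} [NontriviallyNormedField 𝕜] [DecidableEq ι]

theorem hasDerivAt_update_apply (x : ι → 𝕜) (k l : ι) :
    HasDerivAt (fun s => update x k s l) (if l = k then 1 else 0) (x k) := by
  by_cases h : l = k
  · subst h
    simpa using hasDerivAt_id' (x l)
  · simpa [h] using hasDerivAt_const (x k) (x l)

theorem hasDerivAt_sum_mul_update_apply (s : Finset ι) (a x : ι → 𝕜) (k : ι) :
    HasDerivAt (fun t => ∑ l ∈ s, a l * update x k t l) (if k ∈ s then a k else 0) (x k) := by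
  simpa using HasDerivAt.fun_sum fun l (_ : l ∈ s) => (hasDerivAt_update_apply x k l).const_mul (a l)

end PartialDerivatives

noncomputable section

namespace GradientRecursion

variable (c α y z : ℝ)

def weight (x : ℕ → ℝ) (j : ℕ) : ℝ :=
  exp (c ^ j * z - c ^ (2 * j) * y - α * ∑ l ∈ range j, c ^ (j - l) * x l)

def tail (n : ℕ) (x : ℕ → ℝ) (k : ℕ) : ℝ :=
  ∑ j ∈ Ico (k + 1) n, c ^ (j - k) * (weight c α y z x j * (1 - exp (-α * x j)))

variable {c α y z}

theorem hasDerivAt_weight_update (x : ℕ → ℝ) (k j : ℕ) :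
    HasDerivAt (fun s => weight c α y z (update x k s) j)
      (weight c α y z x j * -(α * if k < j then c ^ (j - k) else 0)) (x k) := by
  simpa [weight] using
    (((hasDerivAt_sum_mul_update_apply (range j) (fun l => c ^ (j - l)) x k).const_mul α).const_sub
      (c ^ j * z - c ^ (2 * j) * y)).exp

theorem hasDerivAt_sum_update {n k : ℕ} (hk : k < n) (x : ℕ → ℝ) :
    HasDerivAt (fun s => ∑ j ∈ range n,
        weight c α y z (update x k s) j * (1 - exp (-α * update x k s j)))
      (α * (exp (-α * x k) * weight c α y z x k) - α * tail c α y z n x k) (x k) := by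
  have h := HasDerivAt.fun_sum fun j (_ : j ∈ range n) =>
    (hasDerivAt_weight_update (c := c) (α := α) (y := y) (z := z) x k j).fun_mul
      ((((hasDerivAt_update_apply x k j).const_mul (-α)).exp).const_sub 1)
  simp only [update_eq_self] at h
  refine h.congr_deriv ?_
  have hIco : (range n).filter (k < ·) = Ico (k + 1) n := by
    ext; simp only [mem_filter, mem_range, mem_Ico]; omega
  have hterm : ∀ j, weight c α y z x j * -(α * if k < j then c ^ (j - k) else 0)
        * (1 - exp (-α * x j)) + weight c α y z x j * -(exp (-α * x j) * (-α * if j = k then 1 else 0))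
      = (if j = k then α * (exp (-α * x k) * weight c α y z x k) else 0)
        - α * if k < j then c ^ (j - k) * (weight c α y z x j * (1 - exp (-α * x j))) else 0 := by
    intro j
    split_ifs <;> subst_vars <;> first | omega | ring
  simp only [hterm, sum_sub_distrib, sum_ite_eq', mem_range, hk, if_true, ← mul_sum, ← sum_filter,
    hIco, tail]

theorem tail_eq {n k : ℕ} (hk : k + 1 < n) (x : ℕ → ℝ) :
    tail c α y z n x k = c * (weight c α y z x (k + 1) * (1 - exp (-α * x (k + 1))))
      + c * tail c α y z n x (k + 1) := by
  rw [tail, sum_eq_sum_Ico_succ_bot hk, tail, mul_sum]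
  congr 1
  · simp
  · refine sum_congr rfl fun j hj => ?_
    rw [show j - k = j - (k + 1) + 1 by grind, pow_succ']
    ring

theorem exp_neg_mul_weight (hα : α ≠ 0) (x : ℕ → ℝ) (k : ℕ) :
    exp (-α * x k) * weight c α y z x k = exp (-c ^ (2 * k) * y)
      * exp (-α * ((∑ l ∈ range (k + 1), c ^ (k - l) * x l) - c ^ k * z / α)) := by
  rw [weight, ← exp_add, ← exp_add, sum_range_succ]
  congr 1
  field_simp
  simp only [tsub_self, pow_zero, mul_one]
  ring

theorem weight_succ (hα : α ≠ 0) (x : ℕ → ℝ) (k : ℕ) :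
    weight c α y z x (k + 1) = exp (-c ^ (2 * k) * y)
      * exp (-α * c * ((∑ l ∈ range (k + 1), c ^ (k - l) * x l) - c ^ k * z / α)
        - c ^ (2 * k) * (c ^ 2 - 1) * y) := by
  have hsum : ∑ l ∈ range (k + 1), c ^ (k + 1 - l) * x l
      = c * ∑ l ∈ range (k + 1), c ^ (k - l) * x l := by
    rw [mul_sum]
    refine sum_congr rfl fun l hl => ?_
    rw [show k + 1 - l = k - l + 1 by grind, pow_succ']
    ring
  rw [weight, ← exp_add, hsum]
  congr 1
  field_simp
  ring

end GradientRecursion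

end

open GradientRecursion

theorem gradient_recursion_general (n : ℕ) (c : ℝ) (hc : c ∈ Set.Ioo (0 : ℝ) 1)
    (α y z : ℝ) (hα : 0 < α)
    (f : (ℕ → ℝ) → ℝ)
    (hf : ∀ x, f x = ∑ k ∈ Finset.range n,
        Real.exp (c ^ k * z - c ^ (2 * k) * y
          - α * ∑ l ∈ Finset.range k, c ^ (k - l) * x l)
        * (1 - Real.exp (-α * x k)))
    (F : ℕ → ℝ → ℝ)
    (hF : ∀ k u, F k u =
      (Real.exp (-α * u) - c * Real.exp (-α * c * u - c ^ (2 * k) * (c ^ 2 - 1) * y))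
        / (1 - c))
    (x : ℕ → ℝ) (k : ℕ) (hk : k + 1 < n) :
    deriv (fun s => f (Function.update x k s)) (x k)
      = c * deriv (fun s => f (Function.update x (k + 1) s)) (x (k + 1))
        + α * (1 - c) * Real.exp (-c ^ (2 * k) * y)
          * F k ((∑ l ∈ Finset.range (k + 1), c ^ (k - l) * x l) - c ^ k * z / α) := by
  have hf' : ∀ x, f x = ∑ j ∈ range n, weight c α y z x j * (1 - exp (-α * x j)) := hf
  have hpartial : ∀ i < n, deriv (fun s => f (update x i s)) (x i)
      = α * (exp (-α * x i) * weight c α y z x i) - α * tail c α y z n x i :=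
    fun i hi => by simpa only [hf'] using (hasDerivAt_sum_update hi x).deriv
  rw [hpartial k (by omega), hpartial (k + 1) hk, tail_eq hk, hF, exp_neg_mul_weight hα.ne',
    weight_succ hα.ne']
  field_simp [sub_ne_zero.2 hc.2.ne']
  ring

theorem gradient_recursion (n : ℕ) (hn : 2 ≤ n) (c : ℝ) (hc : c ∈ Set.Ioo (0 : ℝ) 1)
    (α y z : ℝ) (hα : 0 < α) (hy : 0 ≤ y)
    (f : (ℕ → ℝ) → ℝ)
    (hf : ∀ x, f x = ∑ k ∈ Finset.range n,
        Real.exp (c ^ k * z - c ^ (2 * k) * y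
          - α * ∑ l ∈ Finset.range k, c ^ (k - l) * x l)
        * (1 - Real.exp (-α * x k)))
    (F : ℕ → ℝ → ℝ)
    (hF : ∀ k u, F k u =
      (Real.exp (-α * u) - c * Real.exp (-α * c * u - c ^ (2 * k) * (c ^ 2 - 1) * y))
        / (1 - c))
    (x : ℕ → ℝ) (k : ℕ) (hk : k + 1 < n) :
    deriv (fun s => f (Function.update x k s)) (x k)
      = c * deriv (fun s => f (Function.update x (k + 1) s)) (x (k + 1))
        + α * (1 - c) * Real.exp (-c ^ (2 * k) * y)
          * F k ((∑ l ∈ Finset.range (k + 1), c ^ (k - l) * x l) - c ^ k * z / α) :=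
  gradient_recursion_general n c hc α y z hα f hf F hF x k hk
end

section
/- (Taylor expansion of F_k, core of Lemma 8) Let α > 0, y ≥ 0, k ≥ 0, c ∈ (0,1), and set γ(x) = αx + (1+c)c^{2k}y, R(x) = γ(x)²·∫₀¹ exp(v(1-c)γ(x))(1-v) dv, F(x) = (e^{-αx} - c·e^{-αcx - c^{2k}(c²-1)y})/(1-c), and P(x) = e^{-αx}(1-αx). Then F(x) = P(x) - 2e^{-αx}c^{2k}y + (1-c)·e^{-αx}·(αx + (2+c)c^{2k}y - c·R(x)). -/
open Real

lemma taylor_remainder (s : ℝ) :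
    s ^ 2 * (∫ v in (0:ℝ)..1, Real.exp (v * s) * (1 - v)) = Real.exp s - s - 1 := by
  have h : ∫ v in (0:ℝ)..1, s ^ 2 * (Real.exp (v * s) * (1 - v))
      = Real.exp s - s - 1 := by
    have key : ∀ v : ℝ, HasDerivAt (fun v => Real.exp (v * s) * ((s + 1) - s * v))
        (s ^ 2 * (Real.exp (v * s) * (1 - v))) v := by
      intro v
      have h1 : HasDerivAt (fun v : ℝ => v * s) s v := by
        simpa using (hasDerivAt_id v).mul_const s
      have h2 : HasDerivAt (fun v : ℝ => Real.exp (v * s)) (Real.exp (v * s) * s) v :=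
        h1.exp
      have h3 : HasDerivAt (fun v : ℝ => (s + 1) - s * v) (-s) v := by
        simpa using ((hasDerivAt_id v).const_mul s).const_sub (s + 1)
      have : HasDerivAt (fun v => Real.exp (v * s) * ((s + 1) - s * v))
          (Real.exp (v * s) * s * ((s + 1) - s * v) + Real.exp (v * s) * (-s)) v := h2.mul h3
      convert this using 1
      ring
    have hcont : IntervalIntegrable (fun v => s ^ 2 * (Real.exp (v * s) * (1 - v)))
        MeasureTheory.volume 0 1 := by
      apply Continuous.intervalIntegrable
      continuity
    have := intervalIntegral.integral_eq_sub_of_hasDerivAt (a := (0:ℝ)) (b := 1)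
      (f := fun v => Real.exp (v * s) * ((s + 1) - s * v))
      (fun v _ => key v) hcont
    rw [this]
    simp
    ring
  rw [← h, intervalIntegral.integral_const_mul]

theorem taylor_expansion_F (α y c : ℝ) (k : ℕ) (hα : 0 < α) (hy : 0 ≤ y)
    (hc : c ∈ Set.Ioo (0 : ℝ) 1)
    (γ R F P : ℝ → ℝ)
    (hγ : ∀ x, γ x = α * x + (1 + c) * c ^ (2 * k) * y)
    (hR : ∀ x, R x = γ x ^ 2 * ∫ v in (0 : ℝ)..1, Real.exp (v * (1 - c) * γ x) * (1 - v))
    (hF : ∀ x, F x =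
      (Real.exp (-α * x) - c * Real.exp (-α * c * x - c ^ (2 * k) * (c ^ 2 - 1) * y))
        / (1 - c))
    (hP : ∀ x, P x = Real.exp (-α * x) * (1 - α * x)) :
    ∀ x : ℝ, F x - P x + 2 * Real.exp (-α * x) * c ^ (2 * k) * y
      = (1 - c) * Real.exp (-α * x) * (α * x + (2 + c) * c ^ (2 * k) * y - c * R x) := by
  intro x
  obtain ⟨hc0, hc1⟩ := hc
  have hcne : (1 : ℝ) - c ≠ 0 := by linarith
  set s : ℝ := (1 - c) * γ x with hs
  have hint : ∀ v : ℝ, v * (1 - c) * γ x = v * s := by intro v; rw [hs]; ring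
  have hRs : (1 - c) ^ 2 * R x = Real.exp s - s - 1 := by
    have := taylor_remainder s
    rw [hR x]
    simp_rw [hint]
    rw [show (1-c)^2 * (γ x ^2 * ∫ v in (0:ℝ)..1, Real.exp (v*s) * (1-v))
      = s^2 * ∫ v in (0:ℝ)..1, Real.exp (v*s) * (1-v) by rw [hs]; ring, this]
  have hexp : Real.exp (-α * c * x - c ^ (2 * k) * (c ^ 2 - 1) * y)
      = Real.exp (-α * x) * Real.exp s := by
    rw [← Real.exp_add]
    congr 1
    rw [hs, hγ x]; ring
  have hes : Real.exp s = (1 - c) ^ 2 * R x + s + 1 := by linarith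
  rw [hF x, hP x, hexp, hes, hs, hγ x]
  field_simp
  ring
end
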